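/- Let (Y_n)_{n≥1} be a sequence of independent integrable real-valued random variables, μ ∈ ℝ, S_j = Y_1 + ⋯ + Y_j, and for t ∈ [0,1] set s_n(t) = Σ_{k=1}^{⌊nt⌋} (S_k/k − μ). Suppose (d_n) is a sequence of positive numbers such that there exist constants c > 0, γ > 0 and n₀ ≥ 1 with d_l/d_k ≥ c·(l/k)^γ for all l ≥ k ≥ n₀, and there exist constants C₀ > 0, γ' ∈ (0, γ) and ε ∈ (0,1) with E| (S_n − μn)/d_n | ≤ C₀·exp(γ'(log n)^{1−ε}) for all n ≥ 1. Fix t ∈ [0,1] and a bounded Lipschitz function g : ℝ → ℝ, and set ξ_k = g(s_k(t)/d_k) − E[g(s_k(t)/d_k)]. Then there is a constant C > 0 (depending on g and the above constants) such that for all integers l ≥ k ≥ n₀, |E[ξ_k·ξ_l]| ≤ C·(k/l)^γ·(log l)·(log k)·exp(γ'(log k)^{1−ε}). -/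

import Mathlib

/-!
Put `m = ⌊k t⌋` and `m' = ⌊l t⌋`. Writing `S_j = S_m + (S_j - S_m)` for `m < j ≤ m'` gives
`s_l = s_k + d_l X + (S_m - μ m) H` with `H = ∑_{m < j ≤ m'} 1/j ≤ 2 log l`, where `X` is a
function of `Y_{m+1}, …, Y_{m'}` only, hence independent of `ξ_k`. So `E[ξ_k g(X)] = 0`, and as
`g` is bounded by `B` and `K`-Lipschitz,
`|E[ξ_k ξ_l]| ≤ 2 B K E|s_l / d_l - X| ≤ 2 B K (E|s_k| + H E|S_m - μ m|) / d_l`.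
The growth condition makes `d` almost increasing, so the moment hypothesis bounds every
`E|S_j - μ j|`, `j ≤ k`, by a constant times `d_k exp(γ' (log k)^{1-ε})`; summing `1/j` gives
`E|s_k| ≲ d_k exp(γ' (log k)^{1-ε}) log k`, and finally `d_k / d_l ≲ (k / l)^γ`.
-/

open MeasureTheory ProbabilityTheory Filter
open scoped ENNReal NNReal

/-- `clog x = ln (max x e)`. -/
noncomputable def clog (x : ℝ) : ℝ := Real.log (max x (Real.exp 1))

open Finset

lemma one_le_clog (x : ℝ) : 1 ≤ clog x := by
  rw [clog, Real.le_log_iff_exp_le (by positivity)]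
  exact le_max_right _ _

lemma clog_pos (x : ℝ) : 0 < clog x := zero_lt_one.trans_le (one_le_clog x)

lemma clog_mono : Monotone clog := fun _ _ h =>
  Real.log_le_log (by positivity) (max_le_max_right _ h)

lemma sum_Icc_inv_le_two_mul_clog (n : ℕ) : ∑ j ∈ Icc 1 n, (j : ℝ)⁻¹ ≤ 2 * clog n := by
  have h := harmonic_le_one_add_log n
  simp only [harmonic_eq_sum_Icc, Rat.cast_sum, Rat.cast_inv, Rat.cast_natCast] at h
  have hlog : Real.log n ≤ clog n := by
    rcases n.eq_zero_or_pos with rfl | hn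
    · simpa using (clog_pos 0).le
    · exact Real.log_le_log (by positivity) (le_max_left _ _)
  linarith [one_le_clog n]

lemma sum_Ioc_inv_le_two_mul_clog (m : ℕ) {n l : ℕ} (h : n ≤ l) :
    ∑ j ∈ Ioc m n, (j : ℝ)⁻¹ ≤ 2 * clog l :=
  calc ∑ j ∈ Ioc m n, (j : ℝ)⁻¹ ≤ ∑ j ∈ Icc 1 l, (j : ℝ)⁻¹ :=
        sum_le_sum_of_subset_of_nonneg (fun j hj => by simp only [mem_Ioc, mem_Icc] at hj ⊢; omega)
          fun _ _ _ => by positivity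
    _ ≤ 2 * clog l := sum_Icc_inv_le_two_mul_clog l

lemma clog_add_clog_le (x y : ℝ) : clog x + clog y ≤ 2 * (clog x * clog y) := by
  nlinarith [one_le_clog x, one_le_clog y]

lemma le_of_mul_rpow_le_div {a b x y c γ : ℝ} (ha : 0 < a) (hab : a ≤ b) (hx : 0 < x)
    (hc : 0 ≤ c) (hγ : 0 ≤ γ) (h : c * (b / a) ^ γ ≤ y / x) : c * x ≤ y := by
  have h1 : 1 ≤ (b / a) ^ γ := Real.one_le_rpow ((one_le_div ha).2 hab) hγ
  exact (le_div_iff₀ hx).1 ((le_mul_of_one_le_right hc h1).trans h)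

lemma div_le_inv_mul_rpow_of_mul_rpow_le_div {a b x y c γ : ℝ} (ha : 0 < a) (hb : 0 < b)
    (hc : 0 < c) (h : c * (b / a) ^ γ ≤ y / x) :
    x / y ≤ c⁻¹ * (a / b) ^ γ := by
  rw [← inv_div b a, Real.inv_rpow (by positivity), ← mul_inv, ← inv_div y x]
  exact inv_anti₀ (by positivity) h

lemma exists_forall_le_mul_of_le_mul {d : ℕ → ℝ} (hd : ∀ n, 0 < d n) {c : ℝ} (hc : 0 < c)
    {n₀ : ℕ} (h : ∀ k l, n₀ ≤ k → k ≤ l → c * d k ≤ d l) :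
    ∃ A, 0 < A ∧ ∀ j k, n₀ ≤ k → j ≤ k → d j ≤ A * d k := by
  set T := ∑ i ∈ range n₀, d i
  have hT : 0 ≤ T := sum_nonneg fun i _ => (hd i).le
  have hdn₀ := hd n₀
  refine ⟨(1 + T / d n₀) / c, by positivity, fun j k hk hjk => ?_⟩
  have hdk : 0 ≤ d k / c := (div_pos (hd k) hc).le
  have hA : (1 + T / d n₀) / c * d k = d k / c + T / d n₀ * (d k / c) := by ring
  rcases le_or_gt n₀ j with hj | hj
  · have h1 : d j ≤ d k / c := by rw [le_div_iff₀ hc]; linarith [h j k hj hjk]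
    have h2 : 0 ≤ T / d n₀ * (d k / c) := by positivity
    linarith
  · have h1 : d j ≤ T := single_le_sum (fun i _ => (hd i).le) (mem_range.2 hj)
    have h2 : d n₀ ≤ d k / c := by rw [le_div_iff₀ hc]; linarith [h n₀ k le_rfl hk]
    have h3 : T ≤ T / d n₀ * (d k / c) := by
      rw [div_mul_eq_mul_div, le_div_iff₀ hdn₀]
      exact mul_le_mul_of_nonneg_left h2 hT
    linarith

theorem ProbabilityTheory.iIndepFun.indepFun_of_measurable_iSup {Ω ι β γ δ : Type*}
    [MeasurableSpace Ω] {P : Measure Ω} [mβ : MeasurableSpace β] [MeasurableSpace γ]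
    [MeasurableSpace δ]
    {Y : ι → Ω → β} (hY : ∀ i, Measurable (Y i)) (h : iIndepFun Y P) {I J : Set ι}
    (hIJ : Disjoint I J) {F : Ω → γ} {G : Ω → δ}
    (hF : Measurable[⨆ i ∈ I, mβ.comap (Y i)] F) (hG : Measurable[⨆ j ∈ J, mβ.comap (Y j)] G) :
    IndepFun F G P := by
  rw [IndepFun_iff_Indep]
  exact indep_of_indep_of_le_right
    (indep_of_indep_of_le_left (indep_iSup_of_disjoint (fun i => (hY i).comap_le) h.iIndep hIJ)
      hF.comap_le) hG.comap_le

lemma measurable_iSup_comap {Ω ι β : Type*} [mβ : MeasurableSpace β] (Y : ι → Ω → β)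
    {I : Set ι} {i : ι} (hi : i ∈ I) : Measurable[⨆ j ∈ I, mβ.comap (Y j)] (Y i) :=
  (comap_measurable (Y i)).mono (le_iSup₂ (f := fun j (_ : j ∈ I) => mβ.comap (Y j)) i hi) le_rfl

section
variable {Ω : Type*} [MeasurableSpace Ω] {P : Measure Ω} [IsProbabilityMeasure P]

theorem abs_covariance_le_of_indepFun {F G G' : Ω → ℝ} {M : ℝ}
    (hF : AEStronglyMeasurable F P) (hFM : ∀ ω, |F ω| ≤ M) (hG : MemLp G 2 P)
    (hG' : MemLp G' 2 P) (hFG' : IndepFun F G' P) :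
    |cov[F, G; P]| ≤ 2 * M * ∫ ω, |G ω - G' ω| ∂P := by
  have hFM' : ∀ᵐ ω ∂P, ‖F ω‖ ≤ M := ae_of_all _ hFM
  have hF2 : MemLp F 2 P := .of_bound hF M hFM'
  have hH : MemLp (G - G') 2 P := hG.sub hG'
  have hHi : Integrable (G - G') P := hH.integrable one_le_two
  have hmean : |P[F]| ≤ M := by simpa using norm_integral_le_of_norm_le_const hFM'
  have hcov : cov[F, G; P] = ∫ ω, (F ω - P[F]) * (G ω - G' ω) ∂P := by
    have hsplit : G = (G - G') + G' := (sub_add_cancel G G').symm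
    conv_lhs => rw [hsplit]
    rw [covariance_add_right hF2 hH hG', hFG'.covariance_eq_zero hF2 hG', add_zero,
      covariance_eq_sub hF2 hH, ← integral_const_mul, ← integral_sub]
    · congr 1 with ω
      simp only [Pi.mul_apply, Pi.sub_apply]
      ring
    · exact hHi.bdd_mul hF hFM'
    · exact hHi.const_mul _
  rw [hcov]
  calc |∫ ω, (F ω - P[F]) * (G ω - G' ω) ∂P|
      ≤ ∫ ω, |(F ω - P[F]) * (G ω - G' ω)| ∂P := abs_integral_le_integral_abs
    _ ≤ ∫ ω, 2 * M * |G ω - G' ω| ∂P := by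
        refine integral_mono_of_nonneg (ae_of_all _ fun _ => abs_nonneg _)
          (hHi.abs.const_mul _) (ae_of_all _ fun ω => ?_)
        dsimp only
        rw [abs_mul]
        gcongr
        calc |F ω - P[F]| ≤ |F ω| + |P[F]| := abs_sub _ _
          _ ≤ 2 * M := by linarith [hFM ω]
    _ = 2 * M * ∫ ω, |G ω - G' ω| ∂P := integral_const_mul _ _

end

lemma sum_Icc_one_add_sum_Ioc {M : Type*} [AddCommMonoid M] (f : ℕ → M) {m n : ℕ}
    (h : m ≤ n) : ∑ i ∈ Icc 1 m, f i + ∑ i ∈ Ioc m n, f i = ∑ i ∈ Icc 1 n, f i := by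
  have hIcc : ∀ k, Icc 1 k = Ioc 0 k := fun k => Icc_add_one_left_eq_Ioc 0 k
  rw [hIcc, hIcc]
  exact sum_Ioc_consecutive f m.zero_le h

/-- `meanDevSum S μ ⌊n t⌋₊` is the paper's `s_n(t)`. -/
noncomputable def meanDevSum {Ω : Type*} (S : ℕ → Ω → ℝ) (μ : ℝ) (m : ℕ) (ω : Ω) : ℝ :=
  ∑ j ∈ Icc 1 m, (S j ω / j - μ)

lemma meanDevSum_eq_add {Ω : Type*} (S : ℕ → Ω → ℝ) (μ : ℝ) {m n : ℕ} (hmn : m ≤ n) (ω : Ω) :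
    meanDevSum S μ n ω = meanDevSum S μ m ω
      + ∑ j ∈ Ioc m n, (S j ω - S m ω - μ * (j - m)) / j
      + (S m ω - μ * m) * ∑ j ∈ Ioc m n, (j : ℝ)⁻¹ := by
  rw [meanDevSum, meanDevSum, ← sum_Icc_one_add_sum_Ioc _ hmn, add_assoc, mul_sum,
    ← sum_add_distrib]
  congr 1
  refine sum_congr rfl fun j hj => ?_
  have hj : (j : ℝ) ≠ 0 := Nat.cast_ne_zero.2 (by have := (mem_Ioc.1 hj).1; omega)
  field_simp
  ring

lemma measurable_meanDevSum_iSup {Ω : Type*} {Y S : ℕ → Ω → ℝ}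
    (hS : ∀ n ω, S n ω = ∑ i ∈ Icc 1 n, Y i ω) (μ : ℝ) (m : ℕ) :
    Measurable[⨆ i ∈ Set.Iic m, MeasurableSpace.comap (Y i) inferInstance]
      (meanDevSum S μ m) := by
  refine Finset.measurable_sum _ fun j hj => ?_
  rw [show S j = fun ω => ∑ i ∈ Icc 1 j, Y i ω from funext (hS j)]
  refine ((Finset.measurable_sum _ fun i hi => measurable_iSup_comap Y ?_).div_const _).sub_const _
  simp only [mem_Icc] at hi hj
  exact Set.mem_Iic.2 (by omega)

lemma measurable_sum_Ioc_increment_iSup {Ω : Type*} {Y S : ℕ → Ω → ℝ}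
    (hS : ∀ n ω, S n ω = ∑ i ∈ Icc 1 n, Y i ω) (μ : ℝ) (m n : ℕ) :
    Measurable[⨆ i ∈ Set.Ioi m, MeasurableSpace.comap (Y i) inferInstance]
      fun ω => ∑ j ∈ Ioc m n, (S j ω - S m ω - μ * (j - m)) / j := by
  refine Finset.measurable_sum _ fun j hj => ?_
  have hincr : (fun ω => S j ω - S m ω) = fun ω => ∑ i ∈ Ioc m j, Y i ω := funext fun ω => by
    rw [hS, hS, ← sum_Icc_one_add_sum_Ioc _ (mem_Ioc.1 hj).1.le, add_sub_cancel_left]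
  have hSj : Measurable[⨆ i ∈ Set.Ioi m, MeasurableSpace.comap (Y i) inferInstance]
      fun ω => S j ω - S m ω := by
    rw [hincr]
    exact Finset.measurable_sum _ fun i hi => measurable_iSup_comap Y (mem_Ioc.1 hi).1
  exact (hSj.sub_const _).div_const _

section
variable {Ω : Type*} [MeasurableSpace Ω] {P : Measure Ω} {Y S : ℕ → Ω → ℝ}

lemma integral_abs_sub_mul_le_of_growth {d : ℕ → ℝ} (hd : ∀ n, 0 < d n) (hS0 : ∀ ω, S 0 ω = 0)
    (μ : ℝ) {C₀ γ' ε : ℝ} (hC₀ : 0 ≤ C₀) (hγ' : 0 ≤ γ') (hε : ε ≤ 1)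
    (hmom : ∀ n : ℕ, 1 ≤ n →
      ∫ ω, |(S n ω - μ * n) / d n| ∂P ≤ C₀ * Real.exp (γ' * clog n ^ (1 - ε)))
    {A : ℝ} {k : ℕ} (hA : ∀ j ≤ k, d j ≤ A * d k) {j : ℕ} (hjk : j ≤ k) :
    ∫ ω, |S j ω - μ * j| ∂P ≤ A * d k * (C₀ * Real.exp (γ' * clog k ^ (1 - ε))) := by
  have hA0 : 0 ≤ A := by nlinarith [hA 0 k.zero_le, hd 0, hd k]
  rcases j.eq_zero_or_pos with rfl | hj
  · simp only [hS0, CharP.cast_eq_zero, mul_zero, sub_self, abs_zero, integral_zero]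
    have := hd k
    positivity
  calc ∫ ω, |S j ω - μ * j| ∂P = d j * ∫ ω, |(S j ω - μ * j) / d j| ∂P := by
        simp_rw [abs_div, abs_of_pos (hd j)]
        rw [integral_div, mul_div_cancel₀ _ (hd j).ne']
    _ ≤ d j * (C₀ * Real.exp (γ' * clog j ^ (1 - ε))) :=
        mul_le_mul_of_nonneg_left (hmom j hj) (hd j).le
    _ ≤ A * d k * (C₀ * Real.exp (γ' * clog k ^ (1 - ε))) := by
        have hclog : clog j ^ (1 - ε) ≤ clog k ^ (1 - ε) :=
          Real.rpow_le_rpow (clog_pos _).le (clog_mono (Nat.cast_le.2 hjk))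
            (by linarith)
        have := hd k
        gcongr
        exact hA j hjk

variable [IsProbabilityMeasure P]

lemma integrable_meanDevSum (hS : ∀ j, Integrable (S j) P) (μ : ℝ) (m : ℕ) :
    Integrable (meanDevSum S μ m) P :=
  integrable_finsetSum _ fun j _ => ((hS j).div_const _).sub (integrable_const μ)

lemma integral_abs_meanDevSum_le (hS : ∀ j, Integrable (S j) P) (μ : ℝ) {m : ℕ} {D : ℝ}
    (hD : ∀ j ≤ m, ∫ ω, |S j ω - μ * j| ∂P ≤ D) :
    ∫ ω, |meanDevSum S μ m ω| ∂P ≤ 2 * D * clog m := by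
  have hD0 : 0 ≤ D := (integral_nonneg fun _ => abs_nonneg _).trans (hD 0 m.zero_le)
  have hint : ∀ j ∈ Icc 1 m, Integrable (fun ω => |S j ω - μ * j| * (j : ℝ)⁻¹) P :=
    fun j _ => ((hS j).sub (integrable_const _)).abs.mul_const _
  calc ∫ ω, |meanDevSum S μ m ω| ∂P
      ≤ ∫ ω, ∑ j ∈ Icc 1 m, |S j ω - μ * j| * (j : ℝ)⁻¹ ∂P := by
        refine integral_mono_of_nonneg (ae_of_all _ fun _ => abs_nonneg _)
          (integrable_finsetSum _ hint) (ae_of_all _ fun ω => ?_)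
        refine (abs_sum_le_sum_abs _ _).trans (sum_le_sum fun j hj => le_of_eq ?_)
        have hj : (j : ℝ) ≠ 0 := Nat.cast_ne_zero.2 (by have := (mem_Icc.1 hj).1; omega)
        rw [show S j ω / j - μ = (S j ω - μ * j) * (j : ℝ)⁻¹ by field_simp, abs_mul, abs_inv,
          Nat.abs_cast]
    _ = ∑ j ∈ Icc 1 m, (∫ ω, |S j ω - μ * j| ∂P) * (j : ℝ)⁻¹ := by
        rw [integral_finsetSum _ hint]
        simp_rw [integral_mul_const]
    _ ≤ ∑ j ∈ Icc 1 m, D * (j : ℝ)⁻¹ :=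
        sum_le_sum fun j hj => by gcongr; exact hD j (mem_Icc.1 hj).2
    _ = D * ∑ j ∈ Icc 1 m, (j : ℝ)⁻¹ := (mul_sum ..).symm
    _ ≤ D * (2 * clog m) := by gcongr; exact sum_Icc_inv_le_two_mul_clog m
    _ = 2 * D * clog m := by ring

theorem abs_covariance_meanDevSum_le (hYmeas : ∀ n, Measurable (Y n)) (hindep : iIndepFun Y P)
    (hS : ∀ n ω, S n ω = ∑ i ∈ Icc 1 n, Y i ω) (hSint : ∀ n, Integrable (S n) P) (μ : ℝ)
    {g : ℝ → ℝ} {B K : ℝ} (hgB : ∀ x, |g x| ≤ B) (hgK : ∀ x y, |g x - g y| ≤ K * |x - y|)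
    {m n : ℕ} (hmn : m ≤ n) (d : ℝ) {d' : ℝ} (hd' : 0 < d') :
    |cov[fun ω => g (meanDevSum S μ m ω / d), fun ω => g (meanDevSum S μ n ω / d'); P]|
      ≤ 2 * B * K * (∫ ω, |meanDevSum S μ m ω| ∂P
        + (∑ j ∈ Ioc m n, (j : ℝ)⁻¹) * ∫ ω, |S m ω - μ * m| ∂P) / d' := by
  have hgm : Measurable g := (LipschitzWith.of_dist_le' hgK).continuous.measurable
  have hB : 0 ≤ B := (abs_nonneg _).trans (hgB 0)
  have hK : 0 ≤ K := by simpa using (abs_nonneg _).trans (hgK 1 0)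
  set H := ∑ j ∈ Ioc m n, (j : ℝ)⁻¹ with hH_def
  have hH : 0 ≤ H := sum_nonneg fun _ _ => by positivity
  set X := fun ω => (∑ j ∈ Ioc m n, (S j ω - S m ω - μ * (j - m)) / j) / d'
  have hle : ∀ I : Set ℕ, ⨆ i ∈ I, MeasurableSpace.comap (Y i) inferInstance ≤ ‹_› :=
    fun I => iSup₂_le fun i _ => (hYmeas i).comap_le
  have hpast (k : ℕ) := measurable_meanDevSum_iSup hS μ k
  have hfuture := (measurable_sum_Ioc_increment_iSup hS μ m n).div_const d'
  have hind : IndepFun (fun ω => g (meanDevSum S μ m ω / d)) (fun ω => g (X ω)) P :=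
    hindep.indepFun_of_measurable_iSup hYmeas (Set.Iic_disjoint_Ioi le_rfl)
      (hgm.comp ((hpast m).div_const d)) (hgm.comp hfuture)
  have hmemLp : ∀ {V : Ω → ℝ}, Measurable V → MemLp (fun ω => g (V ω)) 2 P := fun hV =>
    .of_bound (hgm.comp hV).aestronglyMeasurable B (ae_of_all _ fun _ => hgB _)
  have hdecomp : ∀ ω, meanDevSum S μ n ω / d' - X ω
      = (meanDevSum S μ m ω + (S m ω - μ * m) * H) / d' := fun ω => by
    rw [meanDevSum_eq_add S μ hmn ω, ← hH_def]
    simp only [X]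
    field_simp
    ring
  have hsm : Integrable (fun ω => |meanDevSum S μ m ω|) P :=
    (integrable_meanDevSum hSint μ m).abs
  have hSm : Integrable (fun ω => |S m ω - μ * m| * H) P :=
    ((hSint m).sub (integrable_const _)).abs.mul_const H
  calc _ ≤ 2 * B * ∫ ω, |g (meanDevSum S μ n ω / d') - g (X ω)| ∂P :=
        abs_covariance_le_of_indepFun
          (hgm.comp (((hpast m).mono (hle _) le_rfl).div_const d)).aestronglyMeasurable
          (fun ω => hgB _) (hmemLp (((hpast n).mono (hle _) le_rfl).div_const d'))
          (hmemLp (hfuture.mono (hle _) le_rfl)) hind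
    _ ≤ 2 * B * ∫ ω, K * ((|meanDevSum S μ m ω| + |S m ω - μ * m| * H) / d') ∂P := by
        refine mul_le_mul_of_nonneg_left ?_ (by positivity)
        refine integral_mono_of_nonneg (ae_of_all _ fun _ => abs_nonneg _)
          (((hsm.add hSm).div_const d').const_mul K) (ae_of_all _ fun ω => (hgK _ _).trans ?_)
        dsimp only
        rw [hdecomp, abs_div, abs_of_pos hd']
        gcongr
        exact (abs_add_le _ _).trans_eq (by rw [abs_mul, abs_of_nonneg hH])
    _ = _ := by
        rw [integral_const_mul, integral_div, integral_add hsm hSm, integral_mul_const]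
        ring

theorem abs_covariance_meanDevSum_le_mul_clog (hYmeas : ∀ n, Measurable (Y n))
    (hindep : iIndepFun Y P) (hS : ∀ n ω, S n ω = ∑ i ∈ Icc 1 n, Y i ω)
    (hSint : ∀ n, Integrable (S n) P) (μ : ℝ) {g : ℝ → ℝ} {B K : ℝ} (hgB : ∀ x, |g x| ≤ B)
    (hgK : ∀ x y, |g x - g y| ≤ K * |x - y|) {m n k l : ℕ} (hmn : m ≤ n) (hmk : m ≤ k)
    (hnl : n ≤ l) (d : ℝ) {d' : ℝ} (hd' : 0 < d') {D : ℝ}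
    (hD : ∀ j ≤ k, ∫ ω, |S j ω - μ * j| ∂P ≤ D) :
    |cov[fun ω => g (meanDevSum S μ m ω / d), fun ω => g (meanDevSum S μ n ω / d'); P]|
      ≤ 8 * B * K * D * clog k * clog l / d' := by
  have hB : 0 ≤ B := (abs_nonneg _).trans (hgB 0)
  have hK : 0 ≤ K := by simpa using (abs_nonneg _).trans (hgK 1 0)
  have hD0 : 0 ≤ D := (integral_nonneg fun _ => abs_nonneg _).trans (hD 0 k.zero_le)
  have hclog : 2 * D * (clog k + clog l) ≤ 2 * D * (2 * (clog k * clog l)) :=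
    mul_le_mul_of_nonneg_left (clog_add_clog_le k l) (by positivity)
  have := clog_pos l
  calc _ ≤ 2 * B * K * (2 * D * clog k + 2 * clog l * D) / d' := by
        refine (abs_covariance_meanDevSum_le hYmeas hindep hS hSint μ hgB hgK hmn d hd').trans ?_
        gcongr
        · exact (integral_abs_meanDevSum_le hSint μ fun j hj => hD j (hj.trans hmk)).trans
            (by gcongr; exact clog_mono (Nat.cast_le.2 hmk))
        · exact sum_Ioc_inv_le_two_mul_clog m hnl
        · exact hD m hmk
    _ ≤ 2 * B * K * (2 * D * (2 * (clog k * clog l))) / d' := by gcongr; linarith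
    _ = 8 * B * K * D * clog k * clog l / d' := by ring

end

/-- **Covariance estimate.** With `ξ k = g(s k (t)/d k) - E[g(s k (t)/d k)]` for a bounded
Lipschitz `g`, under the growth and moment conditions there is `C > 0` such that for
`l ≥ k ≥ n₀`: `|E[ξ k ξ l]| ≤ C (k/l)^γ (log l)(log k) exp(γ' (log k)^{1-ε})`. -/
theorem stmt7
    {Ω : Type*} [MeasurableSpace Ω] (P : Measure Ω) [IsProbabilityMeasure P]
    (Y : ℕ → Ω → ℝ) (hYmeas : ∀ n, Measurable (Y n)) (hYint : ∀ n, Integrable (Y n) P)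
    (hindep : iIndepFun Y P)
    (μ : ℝ) (S : ℕ → Ω → ℝ) (hS : ∀ n ω, S n ω = ∑ i ∈ Finset.Icc 1 n, Y i ω)
    (t : ℝ) (ht : t ∈ Set.Icc (0 : ℝ) 1)
    (s : ℕ → Ω → ℝ)
    (hs : ∀ n ω, s n ω = ∑ i ∈ Finset.Icc 1 ⌊(n : ℝ) * t⌋₊, (S i ω / i - μ))
    (d : ℕ → ℝ) (hd : ∀ n, 0 < d n)
    (c γ : ℝ) (hc : 0 < c) (hγ : 0 < γ) (n₀ : ℕ) (hn₀ : 1 ≤ n₀)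
    (hratio : ∀ k l : ℕ, n₀ ≤ k → k ≤ l → c * ((l : ℝ) / (k : ℝ)) ^ γ ≤ d l / d k)
    (C₀ γ' ε : ℝ) (hC₀ : 0 < C₀) (hγ' : γ' ∈ Set.Ioo 0 γ) (hε : ε ∈ Set.Ioo (0 : ℝ) 1)
    (hmom : ∀ n : ℕ, 1 ≤ n →
      ∫ ω, |(S n ω - μ * n) / d n| ∂P ≤ C₀ * Real.exp (γ' * clog n ^ (1 - ε)))
    (g : ℝ → ℝ) (hgB : ∃ B : ℝ, ∀ x, |g x| ≤ B)
    (hgL : ∃ K : ℝ, ∀ x y, |g x - g y| ≤ K * |x - y|) :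
    ∃ C : ℝ, 0 < C ∧ ∀ k l : ℕ, n₀ ≤ k → k ≤ l →
      |∫ ω, (g (s k ω / d k) - ∫ ω', g (s k ω' / d k) ∂P)
            * (g (s l ω / d l) - ∫ ω', g (s l ω' / d l) ∂P) ∂P|
        ≤ C * ((k : ℝ) / (l : ℝ)) ^ γ * clog l * clog k
            * Real.exp (γ' * clog k ^ (1 - ε)) := by
  obtain ⟨B, hB⟩ := hgB
  obtain ⟨K, hK⟩ := hgL
  have hB₁ : ∀ x, |g x| ≤ max B 1 := fun x => (hB x).trans (le_max_left B 1)
  have hK₁ : ∀ x y, |g x - g y| ≤ max K 1 * |x - y| :=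
    fun x y => (hK x y).trans (by gcongr; exact le_max_left K 1)
  have hSint : ∀ n, Integrable (S n) P := fun n => by
    rw [show S n = fun ω => ∑ i ∈ Icc 1 n, Y i ω from funext (hS n)]
    exact integrable_finsetSum _ fun i _ => hYint i
  have hpos : ∀ k, n₀ ≤ k → (0 : ℝ) < k := fun k hk => by exact_mod_cast hn₀.trans hk
  obtain ⟨A, hA, hdA⟩ := exists_forall_le_mul_of_le_mul hd hc fun k l hk hkl =>
    le_of_mul_rpow_le_div (hpos k hk) (Nat.cast_le.2 hkl) (hd k) hc.le hγ.le (hratio k l hk hkl)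
  refine ⟨8 * max B 1 * max K 1 * A * C₀ / c, by positivity, fun k l hk hkl => ?_⟩
  obtain rfl : s = fun n : ℕ => meanDevSum S μ ⌊(n : ℝ) * t⌋₊ :=
    funext fun n => funext (hs n)
  have hfloor_le : ∀ n : ℕ, ⌊(n : ℝ) * t⌋₊ ≤ n := fun n =>
    Nat.floor_le_of_le (mul_le_of_le_one_right n.cast_nonneg ht.2)
  set E := Real.exp (γ' * clog k ^ (1 - ε))
  have hD : ∀ j ≤ k, ∫ ω, |S j ω - μ * j| ∂P ≤ A * d k * (C₀ * E) := fun j hj =>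
    integral_abs_sub_mul_le_of_growth hd (by simp [hS]) μ hC₀.le hγ'.1.le hε.2.le hmom
      (fun j hj => hdA j k hk hj) hj
  have := clog_pos k
  have := clog_pos l
  calc _ ≤ 8 * max B 1 * max K 1 * (A * d k * (C₀ * E)) * clog k * clog l / d l :=
        abs_covariance_meanDevSum_le_mul_clog hYmeas hindep hS hSint μ hB₁ hK₁
          (Nat.floor_mono (by gcongr; exact ht.1)) (hfloor_le k) (hfloor_le l) (d k) (hd l) hD
    _ = 8 * max B 1 * max K 1 * A * C₀ * E * clog k * clog l * (d k / d l) := by ring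
    _ ≤ 8 * max B 1 * max K 1 * A * C₀ * E * clog k * clog l * (c⁻¹ * ((k : ℝ) / l) ^ γ) := by
        gcongr
        exact div_le_inv_mul_rpow_of_mul_rpow_le_div (hpos k hk) (hpos l (hk.trans hkl)) hc
          (hratio k l hk hkl)
    _ = _ := by ring
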